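/- Let ℓ₁,…,ℓₙ : ℝ^d → ℝ (n ≥ 2) be differentiable, L-Lipschitz functions with ‖∇ℓⱼ(w)‖ ≤ L for all w and all j. Define f_S = (1/n)·Σ_{j=1}^n ℓⱼ and, for a fixed i, f_{S^i} = (1/(n−1))·Σ_{j≠i} ℓⱼ; suppose both attain their infima, both satisfy the PL condition with parameter μ > 0, and both satisfy the error bound with parameter μ: for every x there is a global minimizer x_p of the function with ‖∇f(x)‖ ≥ μ·‖x − x_p‖. Let w₁, w₂ ∈ ℝ^d satisfy ‖∇f_S(w₁)‖ ≤ ε and ‖∇f_{S^i}(w₂)‖ ≤ ε, and let w₁* be a global minimizer of f_S closest to w₁ and w₂* a global minimizer of f_{S^i} closest to w₂. Then |ℓᵢ(w₁) − ℓᵢ(w₂)| ≤ 2Lε/μ + L²/(μn) + L²/(μ(n−1)). -/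

import Mathlib

/-!
Pass through the closest minimizers. By the error bound and the choice of `wₖ*` as a closest
minimizer, `‖wₖ − wₖ*‖ ≤ ε/μ`, so `|ℓᵢ(wₖ) − ℓᵢ(wₖ*)| ≤ Lε/μ`.
For the middle term write `ℓᵢ = n f_S − (n−1) f_{S^i}`. Since `∇f_{S^i}(w₂*) = 0`, we get
`n ‖∇f_S(w₂*)‖ = ‖∇ℓᵢ(w₂*)‖ ≤ L`, and PL gives `n (f_S(w₂*) − f_S(w₁*)) ≤ L²/(μn)`; symmetrically
`(n−1)(f_{S^i}(w₁*) − f_{S^i}(w₂*)) ≤ L²/(μ(n−1))`. As each `wₖ*` minimizes its own function,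
`ℓᵢ(w₁*) − ℓᵢ(w₂*)` lies between minus the sum of these two gaps and `0`.
-/

open Finset

theorem fderiv_eq_smul_of_eq_add_of_isMin {E : Type*} [NormedAddCommGroup E] [NormedSpace ℝ E]
    {f g h : E → ℝ} {a b : ℝ} {x : E}
    (hfg : ∀ y, h y = a * f y + b * g y) (hf : DifferentiableAt ℝ f x)
    (hg : DifferentiableAt ℝ g x) (hmin : ∀ y, g x ≤ g y) :
    fderiv ℝ h x = a • fderiv ℝ f x := by
  have hg0 : fderiv ℝ g x = 0 := IsLocalMin.fderiv_eq_zero (.of_forall hmin)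
  rw [funext hfg, fderiv_fun_add (hf.const_mul a) (hg.const_mul b), fderiv_const_mul hf,
    fderiv_const_mul hg, hg0, smul_zero, add_zero]

section Gradient

variable {F : Type*} [NormedAddCommGroup F] [InnerProductSpace ℝ F] [CompleteSpace F]

theorem norm_gradient_eq_norm_fderiv (f : F → ℝ) (x : F) : ‖gradient f x‖ = ‖fderiv ℝ f x‖ :=
  (InnerProductSpace.toDual ℝ F).symm.norm_map _

theorem abs_mul_norm_gradient_le_of_eq_add_of_isMin {f g h : F → ℝ} {a b L : ℝ} {x : F}
    (hfg : ∀ y, h y = a * f y + b * g y) (hf : DifferentiableAt ℝ f x)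
    (hg : DifferentiableAt ℝ g x) (hmin : ∀ y, g x ≤ g y) (hh : ‖gradient h x‖ ≤ L) :
    |a| * ‖gradient f x‖ ≤ L := by
  rwa [norm_gradient_eq_norm_fderiv, fderiv_eq_smul_of_eq_add_of_isMin hfg hf hg hmin,
    norm_smul, Real.norm_eq_abs, ← norm_gradient_eq_norm_fderiv] at hh

theorem mul_sub_le_of_pl {f : F → ℝ} {μ a L : ℝ} {x xs : F} (hμ : 0 < μ) (ha : 0 < a)
    (hpl : μ * (f x - f xs) ≤ ‖gradient f x‖ ^ 2) (hg : a * ‖gradient f x‖ ≤ L) :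
    a * (f x - f xs) ≤ L ^ 2 / (μ * a) := by
  rw [le_div_iff₀ (by positivity)]
  calc a * (f x - f xs) * (μ * a) = a ^ 2 * (μ * (f x - f xs)) := by ring
    _ ≤ (a * ‖gradient f x‖) ^ 2 := by rw [mul_pow]; gcongr
    _ ≤ L ^ 2 := pow_le_pow_left₀ (by positivity) hg 2

theorem norm_sub_le_div_of_errorBound {f : F → ℝ} {μ ε : ℝ} {x xs : F} (hμ : 0 < μ)
    (heb : ∃ xp, (∀ y, f xp ≤ f y) ∧ μ * ‖x - xp‖ ≤ ‖gradient f x‖)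
    (hclosest : ∀ v, (∀ y, f v ≤ f y) → ‖x - xs‖ ≤ ‖x - v‖) (hg : ‖gradient f x‖ ≤ ε) :
    ‖x - xs‖ ≤ ε / μ := by
  obtain ⟨xp, hxp, hμxp⟩ := heb
  rw [le_div_iff₀' hμ]
  calc μ * ‖x - xs‖ ≤ μ * ‖x - xp‖ := by gcongr; exact hclosest xp hxp
    _ ≤ ε := hμxp.trans hg

theorem abs_sub_le_of_pl_of_eq_mul_sub_mul {f g h : F → ℝ} {a b μ L : ℝ} {xf xg : F}
    (hμ : 0 < μ) (ha : 0 < a) (hb : 0 < b) (hfg : ∀ y, h y = a * f y - b * g y)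
    (hf : Differentiable ℝ f) (hg : Differentiable ℝ g) (hh : ∀ y, ‖gradient h y‖ ≤ L)
    (hxf : ∀ y, f xf ≤ f y) (hxg : ∀ y, g xg ≤ g y)
    (hplf : ∀ x, μ * (f x - f xf) ≤ ‖gradient f x‖ ^ 2)
    (hplg : ∀ x, μ * (g x - g xg) ≤ ‖gradient g x‖ ^ 2) :
    |h xf - h xg| ≤ L ^ 2 / (μ * a) + L ^ 2 / (μ * b) := by
  have hgradf : |a| * ‖gradient f xg‖ ≤ L :=
    abs_mul_norm_gradient_le_of_eq_add_of_isMin (b := -b) (fun y => by rw [hfg]; ring)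
      (hf xg) (hg xg) hxg (hh xg)
  have hgradg : |-b| * ‖gradient g xf‖ ≤ L :=
    abs_mul_norm_gradient_le_of_eq_add_of_isMin (b := a) (fun y => by rw [hfg]; ring)
      (hg xf) (hf xf) hxf (hh xf)
  rw [abs_of_pos ha] at hgradf
  rw [abs_neg, abs_of_pos hb] at hgradg
  have hgapf := mul_sub_le_of_pl hμ ha (hplf xg) hgradf
  have hgapg := mul_sub_le_of_pl hμ hb (hplg xf) hgradg
  have hf_le := mul_le_mul_of_nonneg_left (hxf xg) ha.le
  have hg_le := mul_le_mul_of_nonneg_left (hxg xf) hb.le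
  rw [hfg, hfg, abs_le]
  constructor <;> nlinarith

end Gradient

theorem eq_mul_mean_sub_mul_mean_erase {n : ℕ} (hn : 2 ≤ n) (x : Fin n → ℝ) (i : Fin n) :
    x i = n * (1 / (n : ℝ) * ∑ j, x j)
      - ((n : ℝ) - 1) * (1 / ((n : ℝ) - 1) * ∑ j ∈ univ.erase i, x j) := by
  have hn' : (2 : ℝ) ≤ n := by exact_mod_cast hn
  have hn1 : (n : ℝ) - 1 ≠ 0 := by linarith
  rw [← Finset.sum_erase_add _ _ (mem_univ i)]
  field_simp
  ring

/-- **Pointwise hypothesis stability under PL, Case 3 (small gradients).**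
Suppose `f_S` and `f_{S^i}` attain their infima, satisfy the PL condition and the error
bound with parameter `μ > 0`, the losses are `L`-Lipschitz with gradients bounded by `L`,
`‖∇f_S(w₁)‖ ≤ ε`, `‖∇f_{S^i}(w₂)‖ ≤ ε`, and `w₁*, w₂*` are closest global minimizers to
`w₁, w₂`. Then `|ℓᵢ(w₁) − ℓᵢ(w₂)| ≤ 2Lε/μ + L²/(μn) + L²/(μ(n−1))`. -/
theorem pl_pointwise_stability_case3 (d n : ℕ) (hn : 2 ≤ n) (i : Fin n) (L μ ε : ℝ)
    (ℓ : Fin n → EuclideanSpace ℝ (Fin d) → ℝ)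
    (hdiff : ∀ j, Differentiable ℝ (ℓ j))
    (hlip : ∀ j x y, |ℓ j x - ℓ j y| ≤ L * ‖x - y‖)
    (hgrad : ∀ j w, ‖gradient (ℓ j) w‖ ≤ L)
    (hμ : 0 < μ)
    (fS fSi : EuclideanSpace ℝ (Fin d) → ℝ)
    (hfS : fS = fun w => (1 / (n : ℝ)) * ∑ j, ℓ j w)
    (hfSi : fSi = fun w => (1 / ((n : ℝ) - 1)) * ∑ j ∈ univ.erase i, ℓ j w)
    (w₁s w₂s : EuclideanSpace ℝ (Fin d))
    (hw₁s : ∀ y, fS w₁s ≤ fS y)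
    (hw₂s : ∀ y, fSi w₂s ≤ fSi y)
    (hPLS : ∀ x, μ * (fS x - fS w₁s) ≤ ‖gradient fS x‖ ^ 2)
    (hPLSi : ∀ x, μ * (fSi x - fSi w₂s) ≤ ‖gradient fSi x‖ ^ 2)
    (hEBS : ∀ x, ∃ xp, (∀ y, fS xp ≤ fS y) ∧ μ * ‖x - xp‖ ≤ ‖gradient fS x‖)
    (hEBSi : ∀ x, ∃ xp, (∀ y, fSi xp ≤ fSi y) ∧ μ * ‖x - xp‖ ≤ ‖gradient fSi x‖)
    (w₁ w₂ : EuclideanSpace ℝ (Fin d))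
    (hgw₁ : ‖gradient fS w₁‖ ≤ ε)
    (hgw₂ : ‖gradient fSi w₂‖ ≤ ε)
    (hclosest₁ : ∀ v, (∀ y, fS v ≤ fS y) → ‖w₁ - w₁s‖ ≤ ‖w₁ - v‖)
    (hclosest₂ : ∀ v, (∀ y, fSi v ≤ fSi y) → ‖w₂ - w₂s‖ ≤ ‖w₂ - v‖) :
    |ℓ i w₁ - ℓ i w₂| ≤ 2 * L * ε / μ + L ^ 2 / (μ * n) + L ^ 2 / (μ * ((n : ℝ) - 1)) := by
  have hn' : (2 : ℝ) ≤ n := by exact_mod_cast hn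
  have hdecomp : ∀ w, ℓ i w = n * fS w - ((n : ℝ) - 1) * fSi w := fun w => by
    subst hfS hfSi
    exact eq_mul_mean_sub_mul_mean_erase hn (ℓ · w) i
  have hdfS : Differentiable ℝ fS := by subst hfS; fun_prop
  have hdfSi : Differentiable ℝ fSi := by subst hfSi; fun_prop
  have hmid : |ℓ i w₁s - ℓ i w₂s| ≤ L ^ 2 / (μ * n) + L ^ 2 / (μ * ((n : ℝ) - 1)) :=
    abs_sub_le_of_pl_of_eq_mul_sub_mul hμ (by linarith) (by linarith) hdecomp hdfS hdfSi
      (hgrad i) hw₁s hw₂s hPLS hPLSi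
  have hd₁ := norm_sub_le_div_of_errorBound hμ (hEBS w₁) hclosest₁ hgw₁
  have hd₂ := norm_sub_le_div_of_errorBound hμ (hEBSi w₂) hclosest₂ hgw₂
  have hL : 0 ≤ L := (norm_nonneg _).trans (hgrad i w₁)
  calc |ℓ i w₁ - ℓ i w₂|
      ≤ |ℓ i w₁ - ℓ i w₁s| + |ℓ i w₁s - ℓ i w₂s| + |ℓ i w₂ - ℓ i w₂s| := by
        rw [abs_sub_comm (ℓ i w₂)]
        linarith [abs_sub_le (ℓ i w₁) (ℓ i w₁s) (ℓ i w₂), abs_sub_le (ℓ i w₁s) (ℓ i w₂s) (ℓ i w₂)]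
    _ ≤ L * (ε / μ) + (L ^ 2 / (μ * n) + L ^ 2 / (μ * ((n : ℝ) - 1))) + L * (ε / μ) := by
        gcongr
        · exact (hlip i w₁ w₁s).trans (by gcongr)
        · exact (hlip i w₂ w₂s).trans (by gcongr)
    _ = 2 * L * ε / μ + L ^ 2 / (μ * n) + L ^ 2 / (μ * ((n : ℝ) - 1)) := by ring
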